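/- arXiv:1911.06504 — 4 statements merged into one kernel-verified Lean document; each statement's English description precedes it below -/
import Mathlib

section
/- Let 0 < λ₁ and λ₂ > 0 with λ₁ + λ₂ < 1. If Q₁ has geometric distribution on ℕ with P(Q₁ = k) = (1-λ₁)λ₁^k, and Q₂ is independent with Bernoulli-geometric distribution P(Q₂ = 0) = 1 - λ₂/(1-λ₁) and P(Q₂ = k) = (λ₂/(1-λ₁))(1-(λ₁+λ₂))(λ₁+λ₂)^{k-1} for k ≥ 1, then Q₁ + Q₂ has geometric distribution with P(Q₁+Q₂ = k) = (1-(λ₁+λ₂))(λ₁+λ₂)^k. -/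
open MeasureTheory ProbabilityTheory

lemma real_key (l₁ l₂ : ℝ) (hl₂ : 0 < l₂) (hsum : l₁ + l₂ < 1) (k : ℕ) :
    (∑ i ∈ Finset.range k,
        (1 - l₁) * l₁ ^ i * ((l₂ / (1 - l₁)) * (1 - (l₁ + l₂)) * (l₁ + l₂) ^ (k - i - 1)))
      + (1 - l₁) * l₁ ^ k * (1 - l₂ / (1 - l₁)) = (1 - (l₁ + l₂)) * (l₁ + l₂) ^ k := by
  have h1 : (1 : ℝ) - l₁ ≠ 0 := by linarith
  have hg := geom_sum₂_mul l₁ (l₁ + l₂) k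
  have hsum' : ∀ i ∈ Finset.range k,
      (1 - l₁) * l₁ ^ i * ((l₂ / (1 - l₁)) * (1 - (l₁ + l₂)) * (l₁ + l₂) ^ (k - i - 1))
        = l₂ * (1 - (l₁ + l₂)) * (l₁ ^ i * (l₁ + l₂) ^ (k - 1 - i)) := by
    intro i hi
    rw [show k - i - 1 = k - 1 - i by omega]
    field_simp
  rw [Finset.sum_congr rfl hsum', ← Finset.mul_sum]
  field_simp
  linear_combination (-(1 - (l₁ + l₂))) * hg

theorem stmt_0 {Ω : Type*} [MeasureSpace Ω] [IsProbabilityMeasure (ℙ : Measure Ω)]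
    (l₁ l₂ : ℝ) (hl₁ : 0 < l₁) (hl₂ : 0 < l₂) (hsum : l₁ + l₂ < 1)
    (Q₁ Q₂ : Ω → ℕ)
    (hQ₁ : ∀ k : ℕ, ℙ {ω | Q₁ ω = k} = ENNReal.ofReal ((1 - l₁) * l₁ ^ k))
    (hQ₂0 : ℙ {ω | Q₂ ω = 0} = ENNReal.ofReal (1 - l₂ / (1 - l₁)))
    (hQ₂ : ∀ k : ℕ, 1 ≤ k →
      ℙ {ω | Q₂ ω = k} =
        ENNReal.ofReal ((l₂ / (1 - l₁)) * (1 - (l₁ + l₂)) * (l₁ + l₂) ^ (k - 1)))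
    (hind : IndepFun Q₁ Q₂ ℙ) :
    ∀ k : ℕ, ℙ {ω | Q₁ ω + Q₂ ω = k} =
      ENNReal.ofReal ((1 - (l₁ + l₂)) * (l₁ + l₂) ^ k) := by
  have hs0 : 0 < l₁ + l₂ := by linarith
  have h1l₁ : (0:ℝ) < 1 - l₁ := by linarith
  have h1s : (0:ℝ) ≤ 1 - (l₁ + l₂) := by linarith
  -- independence of singleton events
  have hpiece : ∀ i j : ℕ, ℙ ({ω | Q₁ ω = i} ∩ {ω | Q₂ ω = j})
      = ℙ {ω | Q₁ ω = i} * ℙ {ω | Q₂ ω = j} := by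
    intro i j
    have := hind.measure_inter_preimage_eq_mul (s := {i}) (t := {j})
      (measurableSet_singleton i) (measurableSet_singleton j)
    simpa [Set.preimage, Set.mem_singleton_iff] using this
  have hA : ∀ i : ℕ, (0:ℝ) ≤ (1 - l₁) * l₁ ^ i :=
    fun i => mul_nonneg h1l₁.le (pow_nonneg hl₁.le i)
  have hB : ∀ j : ℕ, (0:ℝ) ≤ (l₂ / (1 - l₁)) * (1 - (l₁ + l₂)) * (l₁ + l₂) ^ j :=
    fun j => mul_nonneg (mul_nonneg (div_nonneg hl₂.le h1l₁.le) h1s) (pow_nonneg hs0.le j)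
  have hB0 : (0:ℝ) ≤ 1 - l₂ / (1 - l₁) :=
    sub_nonneg.2 ((div_le_one h1l₁).2 (by linarith))
  set c : ℕ → ENNReal := fun m => ENNReal.ofReal ((1 - (l₁ + l₂)) * (l₁ + l₂) ^ m) with hc
  -- upper bound
  have hub : ∀ k : ℕ, ℙ {ω | Q₁ ω + Q₂ ω = k} ≤ c k := by
    intro k
    have hsub : {ω | Q₁ ω + Q₂ ω = k} ⊆
        ⋃ i ∈ Finset.range (k + 1), ({ω | Q₁ ω = i} ∩ {ω | Q₂ ω = k - i}) := by
      intro ω hω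
      simp only [Set.mem_setOf_eq] at hω
      simp only [Set.mem_iUnion, Finset.mem_range, Set.mem_inter_iff, Set.mem_setOf_eq]
      exact ⟨Q₁ ω, by omega, rfl, by omega⟩
    calc ℙ {ω | Q₁ ω + Q₂ ω = k}
        ≤ ∑ i ∈ Finset.range (k + 1), ℙ ({ω | Q₁ ω = i} ∩ {ω | Q₂ ω = k - i}) :=
          (measure_mono hsub).trans (measure_biUnion_finset_le _ _)
      _ = ∑ i ∈ Finset.range (k + 1), ℙ {ω | Q₁ ω = i} * ℙ {ω | Q₂ ω = k - i} :=
          Finset.sum_congr rfl fun i _ => hpiece i (k - i)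
      _ = c k := by
          rw [Finset.sum_range_succ]
          have hterm : ∀ i ∈ Finset.range k,
              ℙ {ω | Q₁ ω = i} * ℙ {ω | Q₂ ω = k - i}
                = ENNReal.ofReal ((1 - l₁) * l₁ ^ i *
                    ((l₂ / (1 - l₁)) * (1 - (l₁ + l₂)) * (l₁ + l₂) ^ (k - i - 1))) := by
            intro i hi
            have hik : i < k := Finset.mem_range.1 hi
            rw [hQ₁ i, hQ₂ (k - i) (by omega), ← ENNReal.ofReal_mul (hA i)]
          rw [Finset.sum_congr rfl hterm, Nat.sub_self, hQ₁ k, hQ₂0, ← ENNReal.ofReal_mul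
            (hA k), ← ENNReal.ofReal_sum_of_nonneg (fun i _ => mul_nonneg (hA i) (hB _)),
            ← ENNReal.ofReal_add (Finset.sum_nonneg fun i _ => mul_nonneg (hA i) (hB _))
              (mul_nonneg (hA k) hB0), real_key l₁ l₂ hl₂ hsum k]
  -- total mass of c is 1
  have hslt : l₁ + l₂ < 1 := hsum
  have hsumm : Summable (fun m : ℕ => (1 - (l₁ + l₂)) * (l₁ + l₂) ^ m) :=
    (summable_geometric_of_lt_one hs0.le hslt).mul_left _
  have hct : ∑' m, c m = 1 := by
    rw [hc]
    rw [← ENNReal.ofReal_tsum_of_nonneg (fun m => mul_nonneg h1s (pow_nonneg hs0.le m)) hsumm]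
    rw [tsum_mul_left, tsum_geometric_of_lt_one hs0.le hslt]
    rw [mul_inv_cancel₀ (by linarith), ENNReal.ofReal_one]
  -- lower bound via squeeze
  have h1 : (1 : ENNReal) ≤ ∑' m, ℙ {ω | Q₁ ω + Q₂ ω = m} := by
    have hcover : (Set.univ : Set Ω) ⊆ ⋃ m : ℕ, {ω | Q₁ ω + Q₂ ω = m} := fun ω _ =>
      Set.mem_iUnion.2 ⟨Q₁ ω + Q₂ ω, rfl⟩
    calc (1 : ENNReal) = ℙ (Set.univ : Set Ω) := (measure_univ).symm
      _ ≤ ℙ (⋃ m : ℕ, {ω | Q₁ ω + Q₂ ω = m}) := measure_mono hcover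
      _ ≤ ∑' m, ℙ {ω | Q₁ ω + Q₂ ω = m} := measure_iUnion_le _
  intro k
  by_contra hne
  have hlt : ℙ {ω | Q₁ ω + Q₂ ω = k} < c k := (hub k).lt_of_ne hne
  have hfin : ∑' m, ℙ {ω | Q₁ ω + Q₂ ω = m} ≠ ⊤ := by
    refine ne_top_of_le_ne_top (by rw [hct]; exact ENNReal.one_ne_top) (ENNReal.tsum_le_tsum hub)
  have : ∑' m, ℙ {ω | Q₁ ω + Q₂ ω = m} < ∑' m, c m :=
    ENNReal.tsum_lt_tsum hfin hub hlt
  rw [hct] at this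
  exact absurd h1 (not_le.2 this)
end

section
/- Let λᵢ > 0 for 1 ≤ i ≤ n with Σλᵢ < 1. Define for each i the Bernoulli-geometric random variable Qᵢ with parameters p_i = λᵢ/(1-(λ₁+...+λ_{i-1})) and α_i = λ₁+...+λᵢ, i.e. P(Qᵢ=0) = 1-p_i and P(Qᵢ=k) = p_i(1-α_i)α_i^{k-1} for k ≥ 1. If Q₁,...,Q_n are independent, then for each 1 ≤ i ≤ n, Q₁+...+Qᵢ is geometric with P(Q₁+...+Qᵢ = k) = (1-α_i)α_i^k for all k ∈ ℕ. -/
open MeasureTheory ProbabilityTheory ENNReal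

section helpers

lemma aux_tsum_pi : ∀ (n : ℕ) (F : Fin n → ℕ → ℝ≥0∞),
    ∑' g : Fin n → ℕ, ∏ i, F i (g i) = ∏ i, ∑' k, F i k := by
  intro n
  induction n with
  | zero =>
    intro F
    simp only [Finset.univ_eq_empty, Finset.prod_empty]
    exact tsum_eq_single default fun b hb => absurd (Subsingleton.elim b default) hb
  | succ n ih =>
    intro F
    rw [← (Fin.consEquiv fun _ : Fin (n+1) => ℕ).tsum_eq, ENNReal.tsum_prod']
    have key : ∀ (r : ℕ) (h : Fin n → ℕ),
        ∏ i, F i (Fin.consEquiv (fun _ : Fin (n+1) => ℕ) (r, h) i)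
          = F 0 r * ∏ i : Fin n, F i.succ (h i) := by
      intro r h
      rw [Fin.prod_univ_succ]
      simp [Fin.consEquiv]
    simp_rw [key, ENNReal.tsum_mul_left, ENNReal.tsum_mul_right, ih fun i => F i.succ]
    rw [Fin.prod_univ_succ]



lemma aux_partition {Ω : Type*} [MeasureSpace Ω] [IsProbabilityMeasure (ℙ : Measure Ω)]
    {n : ℕ} (Q : Fin n → Ω → ℕ) (f : (Fin n → ℕ) → ℝ≥0∞)
    (hatom : ∀ g, ℙ (⋂ j ∈ Finset.univ, Q j ⁻¹' {g j}) = f g)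
    (htot : ∑' g, f g = 1) (S : Set (Fin n → ℕ)) :
    ℙ (⋃ g ∈ S, ⋂ j ∈ Finset.univ, Q j ⁻¹' {g j}) = ∑' g : S, f g := by
  set A : (Fin n → ℕ) → Set Ω := fun g => ⋂ j ∈ Finset.univ, Q j ⁻¹' {g j} with hA
  have hcover : ∀ (T : Set (Fin n → ℕ)), Set.univ ⊆ (⋃ g ∈ T, A g) ∪ (⋃ g ∈ Tᶜ, A g) := by
    intro T ω _
    have hω : ω ∈ A fun j => Q j ω := by simp [hA]
    by_cases h : (fun j => Q j ω) ∈ T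
    · exact Or.inl (Set.mem_biUnion h hω)
    · exact Or.inr (Set.mem_biUnion h hω)
  have hle : ∀ (T : Set (Fin n → ℕ)), ℙ (⋃ g ∈ T, A g) ≤ ∑' g : T, f g := by
    intro T
    refine le_trans (measure_biUnion_le ℙ T.to_countable A) ?_
    exact le_of_eq (tsum_congr fun g => hatom g)
  have hsplit : (∑' g : S, f g) + (∑' g : (Sᶜ : Set _), f g) = 1 := by
    rw [Summable.tsum_add_tsum_compl ENNReal.summable ENNReal.summable, htot]
  have h1 : (1 : ℝ≥0∞) ≤ ℙ (⋃ g ∈ S, A g) + ℙ (⋃ g ∈ Sᶜ, A g) := by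
    calc (1:ℝ≥0∞) = ℙ Set.univ := measure_univ.symm
    _ ≤ ℙ ((⋃ g ∈ S, A g) ∪ (⋃ g ∈ Sᶜ, A g)) := measure_mono (hcover S)
    _ ≤ _ := measure_union_le _ _
  have hyne : (∑' g : (Sᶜ : Set _), f g) ≠ ⊤ := by
    intro h
    rw [h, add_top] at hsplit
    exact (by norm_num : (⊤ : ℝ≥0∞) ≠ 1) hsplit
  refine le_antisymm (hle S) ?_
  have : (∑' g : S, f g) + (∑' g : (Sᶜ : Set _), f g)
      ≤ ℙ (⋃ g ∈ S, A g) + (∑' g : (Sᶜ : Set _), f g) := by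
    rw [hsplit]
    exact le_trans h1 (add_le_add le_rfl (hle Sᶜ))
  exact (ENNReal.add_le_add_iff_right hyne).mp this


lemma aux_recur {n : ℕ} (p : Fin n → ℕ → ℝ≥0∞) (a : Fin n) (h1 : ∑' m, p a m = 1)
    (T : Finset (Fin n)) (ha : a ∉ T) (k : ℕ) :
    (∑' g : {g : Fin n → ℕ | ∑ j ∈ insert a T, g j = k}, ∏ j, p j (g.1 j))
      = ∑ r ∈ Finset.range (k+1),
          p a r * ∑' g : {g : Fin n → ℕ | ∑ j ∈ T, g j = k - r}, ∏ j, p j (g.1 j) := by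
  classical
  set e := Equiv.funSplitAt a ℕ with he
  have k1 : ∀ (r : ℕ) (h : {j : Fin n // j ≠ a} → ℕ), e.symm (r, h) a = r := by
    intro r h; simp [he]
  have k2 : ∀ (r : ℕ) (h : {j : Fin n // j ≠ a} → ℕ) (j : Fin n), j ≠ a →
      e.symm (r, h) j = e.symm (0, h) j := by
    intro r h j hj; simp [he, hj]
  have hconv : ∀ (T' : Finset (Fin n)) (k' : ℕ),
      (∑' g : {g : Fin n → ℕ | ∑ j ∈ T', g j = k'}, ∏ j, p j (g.1 j))
      = ∑' (r : ℕ) (h : {j : Fin n // j ≠ a} → ℕ),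
          (if ∑ j ∈ T', (e.symm (r, h)) j = k' then ∏ j, p j ((e.symm (r, h)) j) else 0) := by
    intro T' k'
    calc (∑' g : {g : Fin n → ℕ | ∑ j ∈ T', g j = k'}, ∏ j, p j (g.1 j))
        = ∑' g : Fin n → ℕ,
            Set.indicator {g : Fin n → ℕ | ∑ j ∈ T', g j = k'} (fun g => ∏ j, p j (g j)) g :=
          tsum_subtype {g : Fin n → ℕ | ∑ j ∈ T', g j = k'} (fun g => ∏ j, p j (g j))
      _ = ∑' g : Fin n → ℕ, (if ∑ j ∈ T', g j = k' then ∏ j, p j (g j) else 0) := by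
          refine tsum_congr fun g => ?_
          rw [Set.indicator_apply]
          simp [Set.mem_setOf_eq]
      _ = ∑' x : ℕ × ({j : Fin n // j ≠ a} → ℕ),
            (if ∑ j ∈ T', (e.symm x) j = k' then ∏ j, p j ((e.symm x) j) else 0) :=
          (e.symm.tsum_eq _).symm
      _ = _ := ENNReal.tsum_prod'
  -- the product factorization
  have k4 : ∀ (r : ℕ) (h : {j : Fin n // j ≠ a} → ℕ),
      (∏ j, p j ((e.symm (r, h)) j))
        = p a r * ∏ j ∈ Finset.univ.erase a, p j ((e.symm (0, h)) j) := by
    intro r h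
    rw [← Finset.mul_prod_erase Finset.univ _ (Finset.mem_univ a), k1]
    congr 1
    refine Finset.prod_congr rfl fun j hj => ?_
    rw [k2 r h j (Finset.ne_of_mem_erase hj)]
  have k3 : ∀ (r : ℕ) (h : {j : Fin n // j ≠ a} → ℕ),
      ∑ j ∈ T, (e.symm (r, h)) j = ∑ j ∈ T, (e.symm (0, h)) j := by
    intro r h
    exact Finset.sum_congr rfl fun j hj => k2 r h j (fun hja => ha (hja ▸ hj))
  set P : ({j : Fin n // j ≠ a} → ℕ) → ℝ≥0∞ :=
    fun h => ∏ j ∈ Finset.univ.erase a, p j ((e.symm (0, h)) j) with hP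
  set s : ({j : Fin n // j ≠ a} → ℕ) → ℕ := fun h => ∑ j ∈ T, (e.symm (0, h)) j with hs
  set J : ℕ → ℝ≥0∞ := fun m => ∑' h : {j : Fin n // j ≠ a} → ℕ, (if s h = m then P h else 0)
    with hJ
  -- Step B : H T m = J m
  have hB : ∀ m : ℕ,
      (∑' g : {g : Fin n → ℕ | ∑ j ∈ T, g j = m}, ∏ j, p j (g.1 j)) = J m := by
    intro m
    rw [hconv T m]
    have : ∀ (r : ℕ) (h : {j : Fin n // j ≠ a} → ℕ),
        (if ∑ j ∈ T, (e.symm (r, h)) j = m then ∏ j, p j ((e.symm (r, h)) j) else 0)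
          = p a r * (if s h = m then P h else 0) := by
      intro r h
      rw [k3, k4, mul_ite, mul_zero]
    simp_rw [this, ENNReal.tsum_mul_left, ENNReal.tsum_mul_right, h1, one_mul]
    rfl
  -- Step A + C + D
  rw [hconv (insert a T) k]
  have hsum_ins : ∀ (r : ℕ) (h : {j : Fin n // j ≠ a} → ℕ),
      ∑ j ∈ insert a T, (e.symm (r, h)) j = r + s h := by
    intro r h
    rw [Finset.sum_insert ha, k1, k3]
  have hC : ∀ r : ℕ,
      (∑' h : {j : Fin n // j ≠ a} → ℕ,
        (if ∑ j ∈ insert a T, (e.symm (r, h)) j = k then ∏ j, p j ((e.symm (r, h)) j) else 0))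
      = if r ≤ k then p a r * J (k - r) else 0 := by
    intro r
    by_cases hr : r ≤ k
    · rw [if_pos hr, hJ]
      rw [← ENNReal.tsum_mul_left]
      refine tsum_congr fun h => ?_
      rw [hsum_ins, k4, mul_ite, mul_zero]
      refine if_congr ?_ rfl rfl
      omega
    · rw [if_neg hr]
      refine ENNReal.summable.tsum_eq_zero_iff.mpr fun h => ?_
      rw [hsum_ins, if_neg (by omega)]
  simp_rw [hC]
  rw [tsum_eq_sum (s := Finset.range (k+1)) (by
    intro r hr
    rw [if_neg (by simpa using hr)])]
  refine Finset.sum_congr rfl fun r hr => ?_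
  rw [if_pos (by simpa using Finset.mem_range_succ_iff.mp hr), hB (k - r)]


lemma aux_pmf_tsum_one (pr α : ℝ) (hpr0 : 0 ≤ pr) (hpr1 : pr ≤ 1) (hα0 : 0 ≤ α) (hα1 : α < 1) :
    ∑' m : ℕ, ENNReal.ofReal (if m = 0 then 1 - pr else pr * (1 - α) * α ^ (m - 1)) = 1 := by
  rw [tsum_eq_zero_add' ENNReal.summable]
  simp only [Nat.add_sub_cancel]
  rw [if_true]
  have hif : ∀ b : ℕ, (if b + 1 = 0 then 1 - pr else pr * (1 - α) * α ^ b)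
      = pr * (1 - α) * α ^ b := fun b => if_neg (Nat.succ_ne_zero b)
  simp_rw [hif]
  have hsm : Summable (fun m : ℕ => pr * (1 - α) * α ^ m) :=
    (summable_geometric_of_lt_one hα0 hα1).mul_left _
  rw [← ENNReal.ofReal_tsum_of_nonneg (fun m => mul_nonneg (mul_nonneg hpr0 (by linarith)) (pow_nonneg hα0 m)) hsm, tsum_mul_left,
    tsum_geometric_of_lt_one hα0 hα1]
  have h1α : (1 : ℝ) - α ≠ 0 := by linarith
  have : pr * (1 - α) * (1 - α)⁻¹ = pr := by field_simp
  rw [this, ← ENNReal.ofReal_add (by linarith) hpr0]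
  norm_num

lemma aux_conv (pr α β : ℝ) (k : ℕ)
    (hpr0 : 0 ≤ pr) (hpr1 : pr ≤ 1) (hα0 : 0 ≤ α) (hβ1 : β ≤ 1) (hαβ : α ≤ β)
    (hprα : pr * (1 - α) = β - α) :
    ∑ r ∈ Finset.range (k+1),
      ENNReal.ofReal (if r = 0 then 1 - pr else pr * (1 - β) * β ^ (r - 1))
        * ENNReal.ofReal ((1 - α) * α ^ (k - r))
      = ENNReal.ofReal ((1 - β) * β ^ k) := by
  have hβ0 : 0 ≤ β := le_trans hα0 hαβ
  have h1β : 0 ≤ 1 - β := by linarith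
  have h1α : 0 ≤ 1 - α := by linarith
  have hterm : ∀ r ∈ Finset.range (k+1),
      ENNReal.ofReal (if r = 0 then 1 - pr else pr * (1 - β) * β ^ (r - 1))
        * ENNReal.ofReal ((1 - α) * α ^ (k - r))
      = ENNReal.ofReal ((if r = 0 then 1 - pr else pr * (1 - β) * β ^ (r - 1))
          * ((1 - α) * α ^ (k - r))) := by
    intro r _
    rw [← ENNReal.ofReal_mul]
    by_cases hr : r = 0
    · rw [if_pos hr]; linarith
    · rw [if_neg hr]
      exact mul_nonneg (mul_nonneg hpr0 h1β) (pow_nonneg hβ0 _)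
  rw [Finset.sum_congr rfl hterm, ← ENNReal.ofReal_sum_of_nonneg]
  · congr 1
    rw [Finset.sum_range_succ']
    have hstep : ∀ i ∈ Finset.range k,
        (if i + 1 = 0 then 1 - pr else pr * (1 - β) * β ^ (i + 1 - 1))
            * ((1 - α) * α ^ (k - (i + 1)))
          = (1 - β) * (β ^ i * α ^ (k - 1 - i) * (β - α)) := by
      intro i hi
      rw [if_neg (Nat.succ_ne_zero i), Nat.add_sub_cancel]
      have : k - (i + 1) = k - 1 - i := by omega
      rw [this]
      linear_combination ((1 - β) * (β ^ i * α ^ (k - 1 - i))) * hprα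
    rw [Finset.sum_congr rfl hstep]
    have hgs : (∑ i ∈ Finset.range k, β ^ i * α ^ (k - 1 - i)) * (β - α) = β ^ k - α ^ k :=
      geom_sum₂_mul β α k
    have h0 : (if (0:ℕ) = 0 then 1 - pr else pr * (1 - β) * β ^ (0 - 1))
        * ((1 - α) * α ^ (k - 0)) = (1 - β) * α ^ k := by
      rw [if_pos rfl, Nat.sub_zero]
      linear_combination (-(α ^ k)) * hprα
    rw [h0, ← Finset.mul_sum, ← Finset.sum_mul, hgs]
    ring
  · intro r hr
    by_cases h : r = 0
    · rw [if_pos h]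
      exact mul_nonneg (by linarith) (mul_nonneg h1α (pow_nonneg hα0 _))
    · rw [if_neg h]
      exact mul_nonneg (mul_nonneg (mul_nonneg hpr0 h1β) (pow_nonneg hβ0 _))
        (mul_nonneg h1α (pow_nonneg hα0 _))

end helpers

theorem stmt_7 {Ω : Type*} [MeasureSpace Ω] [IsProbabilityMeasure (ℙ : Measure Ω)]
    (n : ℕ) (l : Fin n → ℝ) (hl : ∀ i, 0 < l i) (hsum : ∑ i, l i < 1)
    (Q : Fin n → Ω → ℕ)
    (hind : iIndepFun Q ℙ)
    (hpmf : ∀ (i : Fin n) (k : ℕ), ℙ {ω | Q i ω = k} =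
      ENNReal.ofReal
        (if k = 0 then 1 - l i / (1 - ∑ j ∈ Finset.univ.filter (· < i), l j)
         else (l i / (1 - ∑ j ∈ Finset.univ.filter (· < i), l j)) *
           (1 - ∑ j ∈ Finset.univ.filter (· ≤ i), l j) *
           (∑ j ∈ Finset.univ.filter (· ≤ i), l j) ^ (k - 1))) :
    ∀ (i : Fin n) (k : ℕ),
      ℙ {ω | ∑ j ∈ Finset.univ.filter (· ≤ i), Q j ω = k} =
        ENNReal.ofReal
          ((1 - ∑ j ∈ Finset.univ.filter (· ≤ i), l j) *
            (∑ j ∈ Finset.univ.filter (· ≤ i), l j) ^ k) := by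

  -- abbreviations
  set Asum : Fin n → ℝ := fun i => ∑ j ∈ Finset.univ.filter (· ≤ i), l j with hAsum
  set Bsum : Fin n → ℝ := fun i => ∑ j ∈ Finset.univ.filter (· < i), l j with hBsum
  set pr : Fin n → ℝ := fun i => l i / (1 - Bsum i) with hpr
  set p : Fin n → ℕ → ℝ≥0∞ := fun j m => ℙ {ω | Q j ω = m} with hpdef
  have hp : ∀ (j : Fin n) (m : ℕ), p j m =
      ENNReal.ofReal (if m = 0 then 1 - pr j else pr j * (1 - Asum j) * Asum j ^ (m - 1)) := by
    intro j m
    exact hpmf j m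
  -- filter facts
  have hfilter_le : ∀ i : Fin n,
      Finset.univ.filter (· ≤ i) = insert i (Finset.univ.filter (· < i)) := by
    intro i
    ext j
    simp only [Finset.mem_filter, Finset.mem_insert, Finset.mem_univ, true_and]
    rw [Fin.le_def, Fin.lt_def, Fin.ext_iff]
    omega
  have hnotmem : ∀ i : Fin n, i ∉ Finset.univ.filter (· < i) := by
    intro i
    simp [Finset.mem_filter]
  -- real facts
  have hB0 : ∀ i, 0 ≤ Bsum i := fun i =>
    Finset.sum_nonneg fun j _ => (hl j).le
  have hBA : ∀ i, Asum i = l i + Bsum i := by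
    intro i
    rw [hAsum, hBsum]
    simp only
    rw [hfilter_le i, Finset.sum_insert (hnotmem i)]
  have hA1 : ∀ i, Asum i < 1 := by
    intro i
    refine lt_of_le_of_lt ?_ hsum
    exact Finset.sum_le_sum_of_subset_of_nonneg (Finset.filter_subset _ _)
      (fun j _ _ => (hl j).le)
  have hA0 : ∀ i, 0 ≤ Asum i := fun i => Finset.sum_nonneg fun j _ => (hl j).le
  have hB1 : ∀ i, 1 - Bsum i > 0 := by
    intro i
    have := hBA i; have := hA1 i; have := hl i
    linarith
  have hpr0 : ∀ i, 0 ≤ pr i := fun i => div_nonneg (hl i).le (hB1 i).le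
  have hprB : ∀ i, pr i * (1 - Bsum i) = l i := by
    intro i
    rw [hpr]
    exact div_mul_cancel₀ _ (hB1 i).ne'
  have hpr1 : ∀ i, pr i ≤ 1 := by
    intro i
    rw [hpr]
    simp only
    rw [div_le_one (hB1 i)]
    have := hBA i; have := hA1 i
    linarith
  -- sum of pmf = 1
  have hpone : ∀ j, ∑' m, p j m = 1 := by
    intro j
    have hlA : l j ≤ Asum j := by have := hBA j; have := hB0 j; linarith
    simp_rw [hp j]
    exact aux_pmf_tsum_one (pr j) (Asum j) (hpr0 j) (hpr1 j) (hA0 j) (hA1 j)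
  -- atoms
  have hatom : ∀ g : Fin n → ℕ,
      ℙ (⋂ j ∈ Finset.univ, Q j ⁻¹' {g j}) = ∏ j, p j (g j) := by
    intro g
    rw [hind.measure_inter_preimage_eq_mul Finset.univ
      (sets := fun j => {g j}) (fun j _ => measurableSet_singleton _)]
    rfl
  have htot : ∑' g : Fin n → ℕ, ∏ j, p j (g j) = 1 := by
    rw [aux_tsum_pi n p]
    simp [hpone]
  -- events as unions of atoms
  have hevent : ∀ (T : Finset (Fin n)) (k : ℕ),
      {ω | ∑ j ∈ T, Q j ω = k}
        = ⋃ g ∈ {g : Fin n → ℕ | ∑ j ∈ T, g j = k}, ⋂ j ∈ Finset.univ, Q j ⁻¹' {g j} := by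
    intro T k
    ext ω
    simp only [Set.mem_setOf_eq, Set.mem_iUnion, Set.mem_iInter, Set.mem_preimage,
      Set.mem_singleton_iff, Finset.mem_univ, forall_true_left]
    constructor
    · intro h
      exact ⟨fun j => Q j ω, h, fun j => rfl⟩
    · rintro ⟨g, hg, hmem⟩
      rw [← hg]
      exact Finset.sum_congr rfl fun j _ => hmem j
  have key : ∀ (T : Finset (Fin n)) (k : ℕ),
      ℙ {ω | ∑ j ∈ T, Q j ω = k}
        = ∑' g : {g : Fin n → ℕ | ∑ j ∈ T, g j = k}, ∏ j, p j (g.1 j) := by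
    intro T k
    rw [hevent T k]
    exact aux_partition Q (fun g => ∏ j, p j (g j)) hatom htot _
  -- empty-sum evaluation
  have hempty : ∀ m : ℕ,
      (∑' g : {g : Fin n → ℕ | ∑ j ∈ (∅ : Finset (Fin n)), g j = m}, ∏ j, p j (g.1 j))
        = if m = 0 then 1 else 0 := by
    intro m
    by_cases hm : m = 0
    · subst hm
      rw [if_pos rfl]
      have hset : {g : Fin n → ℕ | ∑ j ∈ (∅ : Finset (Fin n)), g j = 0} = Set.univ := by
        ext g; simp
      rw [hset, tsum_univ (fun g : Fin n → ℕ => ∏ j, p j (g j))]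
      exact htot
    · rw [if_neg hm]
      have hset : {g : Fin n → ℕ | ∑ j ∈ (∅ : Finset (Fin n)), g j = m} = ∅ := by
        ext g; simp [Finset.sum_empty]; omega
      rw [hset]
      exact tsum_empty
  -- main induction
  have claim : ∀ (m : ℕ) (i : Fin n), i.val = m → ∀ k : ℕ,
      (∑' g : {g : Fin n → ℕ | ∑ j ∈ Finset.univ.filter (· ≤ i), g j = k}, ∏ j, p j (g.1 j))
        = ENNReal.ofReal ((1 - Asum i) * Asum i ^ k) := by
    intro m
    induction m with
    | zero =>
      intro i hi k
      have hltempty : Finset.univ.filter (· < i) = ∅ := by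
        ext j
        simp only [Finset.mem_filter, Finset.mem_univ, true_and, Finset.notMem_empty,
          iff_false]
        rw [Fin.lt_def, hi]
        omega
      have hfil : Finset.univ.filter (· ≤ i) = insert i (∅ : Finset (Fin n)) := by
        rw [hfilter_le i, hltempty]
      rw [hfil, aux_recur p i (hpone i) ∅ (Finset.notMem_empty i) k]
      simp_rw [hempty]
      rw [Finset.sum_eq_single k]
      · rw [if_pos (Nat.sub_self k), mul_one, hp i k]
        have hBzero : Bsum i = 0 := by
          rw [hBsum]; simp only; rw [hltempty, Finset.sum_empty]
        have hAeq : Asum i = l i := by rw [hBA i, hBzero, add_zero]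
        have hpreq : pr i = l i := by
          rw [hpr]; simp only; rw [hBzero, sub_zero, div_one]
        congr 1
        by_cases hk : k = 0
        · subst hk
          rw [if_pos rfl, hpreq, hAeq, pow_zero, mul_one]
        · rw [if_neg hk, hpreq, hAeq]
          have : k = (k - 1) + 1 := by omega
          rw [this, Nat.add_sub_cancel, pow_succ]
          ring
      · intro r hr hrk
        rw [if_neg (by simp only [Finset.mem_range] at hr; omega), mul_zero]
      · intro hk
        exact absurd (Finset.self_mem_range_succ k) hk
    | succ m ih =>
      intro i hi k
      have hmn : m < n := by omega
      set i' : Fin n := ⟨m, hmn⟩ with hi'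
      have hlt_eq : Finset.univ.filter (· < i) = Finset.univ.filter (· ≤ i') := by
        ext j
        simp only [Finset.mem_filter, Finset.mem_univ, true_and]
        rw [Fin.lt_def, Fin.le_def, hi]
        simp only [hi']
        omega
      have hfil : Finset.univ.filter (· ≤ i)
          = insert i (Finset.univ.filter (· ≤ i')) := by
        rw [hfilter_le i, hlt_eq]
      have hnot : i ∉ Finset.univ.filter (· ≤ i') := by
        simp only [Finset.mem_filter, Finset.mem_univ, true_and]
        rw [Fin.le_def]
        simp only [hi']
        omega
      rw [hfil, aux_recur p i (hpone i) _ hnot k]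
      have hih := ih i' rfl
      simp_rw [hih, hp i]
      have hBeq : Bsum i = Asum i' := by
        rw [hBsum, hAsum]
        simp only
        rw [hlt_eq]
      have hαβ : Asum i' ≤ Asum i := by
        have h1 := hBA i
        have h2 := hl i
        rw [hBeq] at h1
        linarith
      have hprα : pr i * (1 - Asum i') = Asum i - Asum i' := by
        rw [← hBeq, hprB i, hBA i, hBeq]
        ring
      exact aux_conv (pr i) (Asum i') (Asum i) k (hpr0 i) (hpr1 i) (hA0 i') (hA1 i).le
        hαβ hprα
  intro i k
  rw [key (Finset.univ.filter (· ≤ i)) k, claim i.val i rfl k]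
end

section
/- Let f(x) = 1-√x. For 0 ≤ x₂ < x₁ ≤ 1 and i < j natural numbers, the quantity P(x₁ ≥ U_i, x₂ ≥ U_j) := 1 - f(x₁)^{i+1} - f(x₂)^{j+1}(1 - (f(x₁)/f(x₂))^{i+1}) lies in [0,1], and is monotone non-decreasing in both x₁ and x₂. -/
/-!
With `a = f x₁` and `b = f x₂` (so `0 ≤ a ≤ b ≤ 1`), `n = i + 1` and `k = j - i`, the formula is
`1 - (aⁿ (1 - bᵏ) + bⁿ⁺ᵏ)`. This polynomial is nonnegative, equals `1` at `a = b = 1`, and is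
monotone in `a` and, as long as `a ≤ b`, in `b`; since `f` is antitone, all claims follow.
-/

/-- The two-speed joint CDF formula of Theorem 2.8, with `f x = 1 - √x`. -/
noncomputable def jointCDF (i j : ℕ) (x₁ x₂ : ℝ) : ℝ :=
  1 - (1 - Real.sqrt x₁) ^ (i + 1) -
    (1 - Real.sqrt x₂) ^ (j + 1) *
      (1 - ((1 - Real.sqrt x₁) / (1 - Real.sqrt x₂)) ^ (i + 1))

open Real

lemma one_sub_sqrt_antitone : Antitone fun x : ℝ => 1 - √x :=
  fun _ _ h => sub_le_sub_left (sqrt_le_sqrt h) 1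

lemma one_sub_sqrt_le_one (x : ℝ) : 1 - √x ≤ 1 :=
  sub_le_self 1 (sqrt_nonneg x)

lemma one_sub_sqrt_nonneg {x : ℝ} (hx : x ≤ 1) : 0 ≤ 1 - √x :=
  sub_nonneg.2 (sqrt_le_one.2 hx)

lemma one_sub_sqrt_pos {x : ℝ} (hx : x < 1) : 0 < 1 - √x :=
  sub_pos.2 (not_le.1 (mt one_le_sqrt.1 (not_le.2 hx)))

/-- `jointTail n k a b = 1 - P(x₁ ≥ U_i, x₂ ≥ U_j)` for `a = f x₁`, `b = f x₂`, `n = i + 1`,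
`k = j - i`. -/
def jointTail (n k : ℕ) (a b : ℝ) : ℝ :=
  a ^ n * (1 - b ^ k) + b ^ (n + k)

section jointTail

variable {n k : ℕ} {a a' b b' : ℝ}

lemma jointTail_nonneg (ha : 0 ≤ a) (hb₀ : 0 ≤ b) (hb₁ : b ≤ 1) : 0 ≤ jointTail n k a b :=
  add_nonneg (mul_nonneg (pow_nonneg ha n) (sub_nonneg.2 (pow_le_one₀ hb₀ hb₁)))
    (pow_nonneg hb₀ _)

lemma jointTail_mono_left (ha' : 0 ≤ a') (ha : a' ≤ a) (hb₀ : 0 ≤ b) (hb₁ : b ≤ 1) :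
    jointTail n k a' b ≤ jointTail n k a b :=
  add_le_add_left (mul_le_mul_of_nonneg_right (pow_le_pow_left₀ ha' ha n)
    (sub_nonneg.2 (pow_le_one₀ hb₀ hb₁))) _

lemma jointTail_mono_right (ha : 0 ≤ a) (hab' : a ≤ b') (hb : b' ≤ b) :
    jointTail n k a b' ≤ jointTail n k a b := by
  have hb' : 0 ≤ b' := ha.trans hab'
  -- the difference is `bᵏ (bⁿ - b'ⁿ) + (b'ⁿ - aⁿ) (bᵏ - b'ᵏ)`
  have hbn : b' ^ n ≤ b ^ n := pow_le_pow_left₀ hb' hb n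
  have hbk : b' ^ k ≤ b ^ k := pow_le_pow_left₀ hb' hb k
  have han : a ^ n ≤ b' ^ n := pow_le_pow_left₀ ha hab' n
  have key : 0 ≤ b ^ k * (b ^ n - b' ^ n) + (b' ^ n - a ^ n) * (b ^ k - b' ^ k) :=
    add_nonneg (mul_nonneg (pow_nonneg (hb'.trans hb) k) (sub_nonneg.2 hbn))
      (mul_nonneg (sub_nonneg.2 han) (sub_nonneg.2 hbk))
  unfold jointTail
  rw [pow_add, pow_add]
  linarith

lemma jointTail_mono (ha' : 0 ≤ a') (ha : a' ≤ a) (hab' : a' ≤ b') (hb : b' ≤ b) (hb₁ : b ≤ 1) :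
    jointTail n k a' b' ≤ jointTail n k a b :=
  (jointTail_mono_right ha' hab' hb).trans
    (jointTail_mono_left ha' ha (ha'.trans (hab'.trans hb)) hb₁)

lemma jointTail_le_one (ha : 0 ≤ a) (hab : a ≤ b) (hb₁ : b ≤ 1) : jointTail n k a b ≤ 1 := by
  simpa [jointTail] using jointTail_mono (n := n) (k := k) ha (hab.trans hb₁) hab hb₁ le_rfl

end jointTail

lemma one_sub_pow_sub_mul_eq_one_sub_jointTail (n k : ℕ) (a : ℝ) {b : ℝ} (hb : b ≠ 0) :
    1 - a ^ n - b ^ (n + k) * (1 - (a / b) ^ n) = 1 - jointTail n k a b := by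
  have hbn : b ^ (n + k) * (a / b) ^ n = a ^ n * b ^ k := by
    rw [div_pow, pow_add]
    field_simp
  rw [jointTail, mul_one_sub, hbn]
  ring

lemma jointCDF_eq_one_sub_jointTail {i j : ℕ} (hij : i ≤ j) (x₁ : ℝ) {x₂ : ℝ} (hx₂ : x₂ < 1) :
    jointCDF i j x₁ x₂ = 1 - jointTail (i + 1) (j - i) (1 - √x₁) (1 - √x₂) := by
  rw [jointCDF, ← one_sub_pow_sub_mul_eq_one_sub_jointTail _ _ _ (one_sub_sqrt_pos hx₂).ne',
    show i + 1 + (j - i) = j + 1 by omega]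

theorem stmt_15_general (i j : ℕ) (hij : i < j) (x₁ x₂ x₁' x₂' : ℝ)
    (h2 : x₂ < x₁) (h3 : x₁ ≤ 1)
    (h2' : x₂' < x₁') (h3' : x₁' ≤ 1)
    (hm1 : x₁ ≤ x₁') (hm2 : x₂ ≤ x₂') :
    0 ≤ jointCDF i j x₁ x₂ ∧ jointCDF i j x₁ x₂ ≤ 1 ∧
      jointCDF i j x₁ x₂ ≤ jointCDF i j x₁' x₂' := by
  have ha := one_sub_sqrt_nonneg h3
  have ha' := one_sub_sqrt_nonneg h3'
  have hab := one_sub_sqrt_antitone h2.le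
  have hab' := one_sub_sqrt_antitone h2'.le
  rw [jointCDF_eq_one_sub_jointTail hij.le _ (h2.trans_le h3),
    jointCDF_eq_one_sub_jointTail hij.le _ (h2'.trans_le h3')]
  refine ⟨sub_nonneg.2 (jointTail_le_one ha hab (one_sub_sqrt_le_one x₂)),
    sub_le_self 1 (jointTail_nonneg ha (ha.trans hab) (one_sub_sqrt_le_one x₂)),
    sub_le_sub_left (jointTail_mono ha' (one_sub_sqrt_antitone hm1) hab'
      (one_sub_sqrt_antitone hm2) (one_sub_sqrt_le_one x₂)) 1⟩

theorem stmt_15 (i j : ℕ) (hij : i < j) (x₁ x₂ x₁' x₂' : ℝ)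
    (h1 : 0 ≤ x₂) (h2 : x₂ < x₁) (h3 : x₁ ≤ 1)
    (h1' : 0 ≤ x₂') (h2' : x₂' < x₁') (h3' : x₁' ≤ 1)
    (hm1 : x₁ ≤ x₁') (hm2 : x₂ ≤ x₂') :
    0 ≤ jointCDF i j x₁ x₂ ∧ jointCDF i j x₁ x₂ ≤ 1 ∧
      jointCDF i j x₁ x₂ ≤ jointCDF i j x₁' x₂' :=
  stmt_15_general i j hij x₁ x₂ x₁' x₂' h2 h3 h2' h3' hm1 hm2
end

section
/- Let λ₁,...,λ_n > 0 with s = λ₁+...+λ_n < 1, and let Q₁,...,Q_n be independent with Qᵢ ~ Ber(λᵢ/(1-(λ₁+...+λ_{i-1})))Geom(λ₁+...+λᵢ). Then for each i, P(Q₁ = 0, ..., Q_{i-1} = 0, Qᵢ > 0) = λᵢ. -/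
open MeasureTheory ProbabilityTheory
open scoped ENNReal

private def pSets {n : ℕ} (i : Fin n) : Fin n → Set ℕ :=
  fun j => if j = i then ({0}ᶜ : Set ℕ) else {0}

private lemma telescope_aux (n : ℕ) (l : Fin n → ℝ)
    (h1 : ∀ j : Fin n, 1 - (∑ k ∈ Finset.univ.filter (· < j), l k) ≠ 0) :
    ∀ m : ℕ, m ≤ n →
      ∏ j ∈ Finset.univ.filter (fun j : Fin n => (j : ℕ) < m),
        (1 - l j / (1 - ∑ k ∈ Finset.univ.filter (· < j), l k)) =
      1 - ∑ j ∈ Finset.univ.filter (fun j : Fin n => (j : ℕ) < m), l j := by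
  intro m
  induction m with
  | zero =>
    intro _
    have : Finset.univ.filter (fun j : Fin n => (j : ℕ) < 0) = ∅ := by
      ext j; simp
    simp [this]
  | succ m ih =>
    intro hm
    have hmn : m < n := by omega
    set M : Fin n := ⟨m, hmn⟩ with hM
    have hfil : Finset.univ.filter (fun j : Fin n => (j : ℕ) < m + 1) =
        insert M (Finset.univ.filter (fun j : Fin n => (j : ℕ) < m)) := by
      ext j
      simp only [Finset.mem_filter, Finset.mem_univ, true_and, Finset.mem_insert, hM,
        Fin.ext_iff]
      omega
    have hnotmem : M ∉ Finset.univ.filter (fun j : Fin n => (j : ℕ) < m) := by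
      simp [hM]
    have hSM : (∑ k ∈ Finset.univ.filter (· < M), l k) =
        ∑ j ∈ Finset.univ.filter (fun j : Fin n => (j : ℕ) < m), l j := by
      have hfil2 : Finset.univ.filter (· < M) =
          Finset.univ.filter (fun j : Fin n => (j : ℕ) < m) := by
        ext j; simp [Fin.lt_def, hM]
      rw [hfil2]
    have h1M : 1 - (∑ j ∈ Finset.univ.filter (fun j : Fin n => (j : ℕ) < m), l j) ≠ 0 := by
      rw [← hSM]; exact h1 M
    rw [hfil, Finset.prod_insert hnotmem, Finset.sum_insert hnotmem, ih (by omega), hSM]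
    field_simp
    ring

theorem stmt_18 {Ω : Type*} [MeasureSpace Ω] [IsProbabilityMeasure (ℙ : Measure Ω)]
    (n : ℕ) (l : Fin n → ℝ) (hl : ∀ i, 0 < l i) (hsum : ∑ i, l i < 1)
    (Q : Fin n → Ω → ℕ)
    (hind : iIndepFun Q ℙ)
    (hpmf : ∀ (i : Fin n) (k : ℕ), ℙ {ω | Q i ω = k} =
      ENNReal.ofReal
        (if k = 0 then 1 - l i / (1 - ∑ j ∈ Finset.univ.filter (· < i), l j)
         else (l i / (1 - ∑ j ∈ Finset.univ.filter (· < i), l j)) *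
           (1 - ∑ j ∈ Finset.univ.filter (· ≤ i), l j) *
           (∑ j ∈ Finset.univ.filter (· ≤ i), l j) ^ (k - 1))) :
    ∀ i : Fin n,
      ℙ {ω | (∀ j : Fin n, j < i → Q j ω = 0) ∧ 0 < Q i ω} = ENNReal.ofReal (l i) := by
  classical
  -- basic facts about the partial sums
  have hTS : ∀ j : Fin n, (∑ k ∈ Finset.univ.filter (· ≤ j), l k) =
      (∑ k ∈ Finset.univ.filter (· < j), l k) + l j := by
    intro j
    have hins : Finset.univ.filter (· ≤ j) = insert j (Finset.univ.filter (· < j)) := by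
      ext k
      simp only [Finset.mem_filter, Finset.mem_univ, true_and, Finset.mem_insert]
      constructor
      · intro h; rcases lt_or_eq_of_le h with h | h
        · exact Or.inr h
        · exact Or.inl h
      · rintro (rfl | h)
        · exact le_refl _
        · exact le_of_lt h
    rw [hins, Finset.sum_insert (by simp)]
    ring
  have hTle : ∀ j : Fin n, (∑ k ∈ Finset.univ.filter (· ≤ j), l k) ≤ ∑ k, l k := by
    intro j
    exact Finset.sum_le_sum_of_subset_of_nonneg (Finset.filter_subset _ _)
      (fun k _ _ => (hl k).le)
  have hSnn : ∀ j : Fin n, 0 ≤ (∑ k ∈ Finset.univ.filter (· < j), l k) :=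
    fun j => Finset.sum_nonneg (fun k _ => (hl k).le)
  have hTnn : ∀ j : Fin n, 0 ≤ (∑ k ∈ Finset.univ.filter (· ≤ j), l k) :=
    fun j => Finset.sum_nonneg (fun k _ => (hl k).le)
  have hSl : ∀ j : Fin n, (∑ k ∈ Finset.univ.filter (· < j), l k) + l j < 1 := by
    intro j
    rw [← hTS j]
    exact lt_of_le_of_lt (hTle j) hsum
  have h1S : ∀ j : Fin n, 0 < 1 - (∑ k ∈ Finset.univ.filter (· < j), l k) := by
    intro j
    have := hSl j
    have := hl j
    linarith
  have hT1 : ∀ j : Fin n, (∑ k ∈ Finset.univ.filter (· ≤ j), l k) < 1 := by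
    intro j
    rw [hTS j]
    exact hSl j
  have hp0 : ∀ j : Fin n, 0 < l j / (1 - ∑ k ∈ Finset.univ.filter (· < j), l k) :=
    fun j => div_pos (hl j) (h1S j)
  have hp1 : ∀ j : Fin n, l j / (1 - ∑ k ∈ Finset.univ.filter (· < j), l k) < 1 := by
    intro j
    rw [div_lt_one (h1S j)]
    have := hSl j
    linarith
  -- measure of {Q j = 0}
  have hA : ∀ j : Fin n, ℙ (Q j ⁻¹' ({0} : Set ℕ)) =
      ENNReal.ofReal (1 - l j / (1 - ∑ k ∈ Finset.univ.filter (· < j), l k)) := by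
    intro j
    have hset : Q j ⁻¹' ({0} : Set ℕ) = {ω | Q j ω = 0} := by
      ext ω; simp
    rw [hset, hpmf j 0, if_pos rfl]
  -- measure of {Q i > 0}
  intro i
  have hB : ℙ (Q i ⁻¹' ({0}ᶜ : Set ℕ)) =
      ENNReal.ofReal (l i / (1 - ∑ k ∈ Finset.univ.filter (· < i), l k)) := by
    set p : ℝ := l i / (1 - ∑ k ∈ Finset.univ.filter (· < i), l k) with hpdef
    set T : ℝ := ∑ k ∈ Finset.univ.filter (· ≤ i), l k with hTdef
    have hT0 : 0 ≤ T := hTnn i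
    have hT1' : T < 1 := hT1 i
    have h1T : (0:ℝ) < 1 - T := by linarith
    apply le_antisymm
    · -- upper bound via countable subadditivity
      have hcover : Q i ⁻¹' ({0}ᶜ : Set ℕ) ⊆ ⋃ k : ℕ, {ω | Q i ω = k + 1} := by
        intro ω h
        simp only [Set.mem_preimage, Set.mem_compl_iff, Set.mem_singleton_iff] at h
        simp only [Set.mem_iUnion, Set.mem_setOf_eq]
        exact ⟨Q i ω - 1, by omega⟩
      have hnn : ∀ k : ℕ, 0 ≤ p * (1 - T) * T ^ k := by
        intro k
        have := hp0 i
        positivity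
      have hsummable : Summable (fun k : ℕ => p * (1 - T) * T ^ k) :=
        (summable_geometric_of_lt_one hT0 hT1').mul_left _
      calc ℙ (Q i ⁻¹' ({0}ᶜ : Set ℕ)) ≤ ℙ (⋃ k : ℕ, {ω | Q i ω = k + 1}) :=
            measure_mono hcover
        _ ≤ ∑' k : ℕ, ℙ {ω | Q i ω = k + 1} := measure_iUnion_le _
        _ = ∑' k : ℕ, ENNReal.ofReal (p * (1 - T) * T ^ k) := by
            refine tsum_congr fun k => ?_
            rw [hpmf i (k + 1)]
            simp [hpdef, hTdef]
        _ = ENNReal.ofReal (∑' k : ℕ, p * (1 - T) * T ^ k) :=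
            (ENNReal.ofReal_tsum_of_nonneg hnn hsummable).symm
        _ = ENNReal.ofReal p := by
            rw [tsum_mul_left, tsum_geometric_of_lt_one hT0 hT1']
            congr 1
            field_simp
    · -- lower bound via finite subadditivity
      have hsplit : (Set.univ : Set Ω) ⊆ Q i ⁻¹' ({0} : Set ℕ) ∪ Q i ⁻¹' ({0}ᶜ : Set ℕ) := by
        intro ω _
        by_cases h : Q i ω = 0 <;> simp [h]
      have h1 : (1 : ℝ≥0∞) ≤ ℙ (Q i ⁻¹' ({0} : Set ℕ)) + ℙ (Q i ⁻¹' ({0}ᶜ : Set ℕ)) := by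
        calc (1 : ℝ≥0∞) = ℙ (Set.univ : Set Ω) := (measure_univ).symm
          _ ≤ ℙ ((Q i ⁻¹' ({0} : Set ℕ)) ∪ (Q i ⁻¹' ({0}ᶜ : Set ℕ))) := measure_mono hsplit
          _ ≤ _ := measure_union_le _ _
      rw [hA i, ← hpdef] at h1
      have hid : ENNReal.ofReal p + ENNReal.ofReal (1 - p) = 1 := by
        rw [← ENNReal.ofReal_add (hp0 i).le (by have := hp1 i; linarith)]
        norm_num [hpdef]
      have h2 : ENNReal.ofReal p + ENNReal.ofReal (1 - p) ≤
          ℙ (Q i ⁻¹' ({0}ᶜ : Set ℕ)) + ENNReal.ofReal (1 - p) := by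
        rw [hid]
        calc (1 : ℝ≥0∞) ≤ ENNReal.ofReal (1 - p) + ℙ (Q i ⁻¹' ({0}ᶜ : Set ℕ)) := h1
          _ = _ := by ring
      exact (ENNReal.add_le_add_iff_right ENNReal.ofReal_ne_top).mp h2
  -- express the event as an intersection over a finite set
  have hEvent : {ω | (∀ j : Fin n, j < i → Q j ω = 0) ∧ 0 < Q i ω} =
      ⋂ j ∈ insert i (Finset.univ.filter (· < i)), Q j ⁻¹' pSets i j := by
    ext ω
    simp only [Set.mem_setOf_eq, Set.mem_iInter, Finset.mem_insert, Finset.mem_filter,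
      Finset.mem_univ, true_and]
    constructor
    · rintro ⟨h0, hpos⟩ j hj
      rcases hj with rfl | hj
      · simp only [pSets, if_pos rfl, Set.mem_preimage, Set.mem_compl_iff,
          Set.mem_singleton_iff]
        exact Nat.pos_iff_ne_zero.mp hpos
      · simp only [pSets, if_neg (ne_of_lt hj), Set.mem_preimage, Set.mem_singleton_iff]
        exact h0 j hj
    · intro h
      constructor
      · intro j hj
        have := h j (Or.inr hj)
        simpa [pSets, if_neg (ne_of_lt hj)] using this
      · have := h i (Or.inl rfl)
        simp only [pSets, if_pos rfl, Set.mem_preimage, Set.mem_compl_iff,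
          Set.mem_singleton_iff] at this
        exact Nat.pos_iff_ne_zero.mpr this
  have hmeas : ∀ j, j ∈ insert i (Finset.univ.filter (· < i)) → MeasurableSet (pSets i j) :=
    fun j _ => .of_discrete
  have hprod := hind.measure_inter_preimage_eq_mul (insert i (Finset.univ.filter (· < i))) hmeas
  have hinotmem : i ∉ Finset.univ.filter (· < i) := by simp
  rw [hEvent, hprod, Finset.prod_insert hinotmem]
  have hseti : pSets i i = ({0}ᶜ : Set ℕ) := by simp [pSets]
  have hcongr : ∏ j ∈ Finset.univ.filter (· < i), ℙ (Q j ⁻¹' pSets i j) =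
      ∏ j ∈ Finset.univ.filter (· < i),
        ENNReal.ofReal (1 - l j / (1 - ∑ k ∈ Finset.univ.filter (· < j), l k)) := by
    refine Finset.prod_congr rfl fun j hj => ?_
    have hji : j < i := by simpa using hj
    rw [pSets]
    simp only [if_neg (ne_of_lt hji)]
    exact hA j
  rw [hseti, hB, hcongr,
    ← ENNReal.ofReal_prod_of_nonneg (fun j _ => by have := hp1 j; linarith),
    ← ENNReal.ofReal_mul (hp0 i).le]
  congr 1
  -- the telescoping product
  have hfili : Finset.univ.filter (· < i) =
      Finset.univ.filter (fun j : Fin n => (j : ℕ) < (i : ℕ)) := by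
    ext j
    simp only [Finset.mem_filter, Finset.mem_univ, true_and]
    exact Iff.rfl
  have htel := telescope_aux n l (fun j => ne_of_gt (h1S j)) (i : ℕ) (le_of_lt i.isLt)
  rw [hfili, htel, ← hfili]
  have h1Si := h1S i
  field_simp
end
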